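/- Let G be a finitely generated group with finitely generated subgroups Λ and Σ, and suppose G is the amalgamated free product of subgroups A₁ and B₁ over Λ (with Λ proper in A₁ and B₁) and also the amalgamated free product of subgroups A₂ and B₂ over Σ (with Σ proper in A₂ and B₂). Let X be the Λ-almost invariant subset of G associated to the first splitting (the set of elements whose normal form with respect to G = A₁ ∗_Λ B₁ begins with a non-trivial element of a transversal of Λ in A₁) and Y the Σ-almost invariant subset associated to the second splitting (defined analogously for G = A₂ ∗_Σ B₂). Assume that for all g, h ∈ G the intersection gΛg⁻¹ ∩ hΣh⁻¹ has infinite index in gΛg⁻¹. If there exists λ ∈ Λ such that λY ⊊ Y or λY* ⊊ Y*, then X crosses Y. -/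

import Mathlib

/-!
Let `Y` be the set of elements whose reduced form in `A₂ ∗_Σ B₂` starts in `A₂`. An element `μ`
with `μY ⊊ Y` must be cyclically reduced, starting in `A₂` and ending in `B₂`; ping-pong then
shows that for every `g`, eventually `μⁿg ∈ Y` and `μ⁻ⁿg ∉ Y`. In particular no positive power of
`μ` lies in `Σ`, so these orbits meet infinitely many cosets `Σg`. Taking `μ ∈ Λ`, and `g` in
the `Λ`-invariant set `X` or in `Λ ⊆ X*`, each of the four corners of `X` and `Y` contains such a
tail of an orbit.
-/

open scoped Pointwise symmDiff

/-- `T` is a right transversal for `Λ` in `A` containing `1`: `T ⊆ A`, `1 ∈ T`, and each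
coset `aΛ` (`a ∈ A`) contains exactly one element of `T`. -/
def IsRightTransversalOf {G : Type*} [Group G] (Lam A : Subgroup G) (T : Set G) : Prop :=
  T ⊆ (A : Set G) ∧ (1 : G) ∈ T ∧ ∀ a ∈ A, ∃! t, t ∈ T ∧ t⁻¹ * a ∈ Lam

/-- `l` is a normal word with respect to the transversals `T` (for `Λ` in `A`) and `T'`
(for `Λ` in `B`): a list of non-identity letters alternating between `T` and `T'`.
Such a list, followed by an element `λ ∈ Λ`, is the normal form `a₁b₁⋯aₙbₙλ` (where `a₁`,
resp. `bₙ`, may be trivial, i.e. absent). -/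
def IsNormalWord {G : Type*} [Group G] (T T' : Set G) (l : List G) : Prop :=
  (∀ x ∈ l, x ≠ 1 ∧ (x ∈ T ∨ x ∈ T')) ∧
    l.Chain' fun x y => (x ∈ T ∧ y ∈ T') ∨ (x ∈ T' ∧ y ∈ T)

/-- Every element of `G` is expressible uniquely in the normal form `a₁b₁⋯aₙbₙλ`.
Together with `IsRightTransversalOf` hypotheses and `Λ = A ⊓ B`, this encodes that `G` is
the amalgamated free product `A ∗_Λ B`. -/
def HasUniqueNormalForms {G : Type*} [Group G] (Lam : Subgroup G) (T T' : Set G) : Prop :=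
  ∀ g : G, ∃! p : List G × G,
    IsNormalWord T T' p.1 ∧ p.2 ∈ Lam ∧ g = p.1.prod * p.2

/-- The set `X` of elements of `G` whose normal form `a₁b₁⋯aₙbₙλ` has `a₁` non-trivial,
i.e. whose normal word is nonempty and begins with a letter of `T`. -/
def amalgX {G : Type*} [Group G] (Lam : Subgroup G) (T T' : Set G) : Set G :=
  {g : G | ∃ (l : List G) (lam : G), IsNormalWord T T' l ∧ lam ∈ Lam ∧
    g = l.prod * lam ∧ ∃ x, l.head? = some x ∧ x ∈ T}

/-- The image of a subset `X ⊆ G` in the set `H\G` of right cosets `Hg`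
(the quotient of `G` by the left multiplication action of `H`). -/
def rproj {G : Type*} [Group G] (H : Subgroup G) (X : Set G) :
    Set (Quotient (QuotientGroup.rightRel H)) :=
  Quotient.mk (QuotientGroup.rightRel H) '' X

/-- Two sets are almost equal if their symmetric difference is finite. -/
def AlmostEqSets {α : Type*} (A B : Set α) : Prop :=
  (A ∆ B).Finite

/-- `X ⊆ G` is `H`-almost invariant: `hX = X` for all `h ∈ H`, and for every `g ∈ G`
the sets `(H\X)g` and `H\X` are almost equal. -/
def IsAlmostInvariant {G : Type*} [Group G] (H : Subgroup G) (X : Set G) : Prop :=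
  (∀ h ∈ H, h • X = X) ∧
    ∀ g : G, AlmostEqSets (rproj H ((fun x => x * g) '' X)) (rproj H X)

/-- `X` crosses `Y`, where `Y` is `K`-almost invariant: each of the four sets
`X ∩ Y`, `Xᶜ ∩ Y`, `X ∩ Yᶜ`, `Xᶜ ∩ Yᶜ` projects to an infinite subset of `K\G`. -/
def Crosses {G : Type*} [Group G] (K : Subgroup G) (X Y : Set G) : Prop :=
  (rproj K (X ∩ Y)).Infinite ∧ (rproj K (Xᶜ ∩ Y)).Infinite ∧
    (rproj K (X ∩ Yᶜ)).Infinite ∧ (rproj K (Xᶜ ∩ Yᶜ)).Infinite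

open Filter Set

section Dynamics

variable {G : Type*} [Group G]

theorem exists_smul_ssubset_of_smul_ssubset_or_smul_compl_ssubset {Λ : Subgroup G} {Y : Set G}
    (h : ∃ l ∈ Λ, l • Y ⊂ Y ∨ l • Yᶜ ⊂ Yᶜ) : ∃ μ ∈ Λ, μ • Y ⊂ Y := by
  obtain ⟨l, hl, hY | hY⟩ := h
  · exact ⟨l, hl, hY⟩
  · refine ⟨l⁻¹, Λ.inv_mem hl, ?_⟩
    rw [smul_set_compl, compl_lt_compl_iff_lt] at hY
    exact ⟨subset_smul_set_iff.1 hY.1, fun h => hY.2 (by simpa using subset_smul_set_iff.1 h)⟩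

theorem not_mapsTo_compl_of_smul_ssubset {P S : Set G} {μ : G} (hμ : μ • P ⊂ P)
    (hS : S ⊆ P ∨ S ⊆ Pᶜ) : ¬ MapsTo (μ * ·) Pᶜ S := by
  intro hmaps
  have hS' : ∀ x, μ⁻¹ * x ∉ P → x ∈ S := fun x hx => by simpa using hmaps hx
  rcases hS with hSP | hSP
  · have huniv : ∀ x, x ∈ P := fun x => by
      by_cases hx : μ⁻¹ * x ∈ P
      · simpa [smul_eq_mul] using hμ.1 (smul_mem_smul_set hx)
      · exact hSP (hS' x hx)
    exact hμ.2 fun g _ => ⟨μ⁻¹ * g, huniv _, by simp⟩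
  · exact hμ.2 fun g hg => ⟨μ⁻¹ * g, by_contra fun hx => hSP (hS' g hx) hg, by simp⟩

theorem not_mapsTo_of_smul_ssubset {P S : Set G} {μ : G} (hμ : μ • P ⊂ P) (hS : S ⊆ Pᶜ) :
    ¬ MapsTo (μ * ·) P S := by
  intro hmaps
  obtain ⟨p, hp, -⟩ := nonempty_of_ssubset hμ
  exact hS (hmaps hp) (hμ.1 (smul_mem_smul_set hp))

theorem exists_pow_mul_mem_of_closure_eq_top {s R : Set G} (hs : Submonoid.closure s = ⊤)
    {μ : G} (h1 : (1 : G) ∈ R) (hR : ∀ y ∈ R, ∀ a ∈ s, μ * y * a ∈ R) (g : G) :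
    ∃ n : ℕ, μ ^ n * g ∈ R :=
  Submonoid.induction_of_closure_eq_top_right hs g ⟨0, by simpa using h1⟩
    fun _ a ha ⟨n, hn⟩ => ⟨n + 1, by simpa [pow_succ', mul_assoc] using hR _ hn a ha⟩

theorem eventually_pow_mul_mem {R : Set G} {μ g : G} (hR : MapsTo (μ * ·) R R) {N : ℕ}
    (hN : μ ^ N * g ∈ R) : ∀ᶠ n in atTop, μ ^ n * g ∈ R := by
  filter_upwards [eventually_ge_atTop N] with n hn
  obtain ⟨k, rfl⟩ := Nat.exists_eq_add_of_le' hn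
  simpa [mul_left_iterate, pow_add, mul_assoc] using hR.iterate k hN

theorem infinite_rproj_of_eventually {K : Subgroup G} {S : Set G} {ν g : G}
    (hν : ∀ k : ℕ, ν ^ k ∈ K → k = 0) (h : ∀ᶠ n in atTop, ν ^ n * g ∈ S) :
    (rproj K S).Infinite := by
  obtain ⟨N, hN⟩ := h.exists_forall_of_atTop
  refine infinite_of_injective_forall_mem
    (f := fun n : ℕ => Quotient.mk (QuotientGroup.rightRel K) (ν ^ (n + N) * g))
    ?_ fun n => ⟨_, hN _ (Nat.le_add_left N n), rfl⟩
  intro m n hmn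
  wlog hle : m ≤ n generalizing m n
  · exact (this hmn.symm (le_of_not_ge hle)).symm
  obtain ⟨k, rfl⟩ := Nat.exists_eq_add_of_le hle
  have hk := QuotientGroup.rightRel_apply.mp (Quotient.exact hmn)
  rw [show ν ^ (m + k + N) * g * (ν ^ (m + N) * g)⁻¹ = ν ^ k by group] at hk
  simp [hν k hk]

theorem crosses_of_eventually {Λ K : Subgroup G} {X Y : Set G} {μ x₀ x₁ : G} (hμ : μ ∈ Λ)
    (hX : ∀ l ∈ Λ, l • X = X) (hx₀ : x₀ ∈ X) (hx₁ : x₁ ∉ X)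
    (hKY : ∀ k ∈ K, k ∉ Y) (hattr : ∀ g, ∀ᶠ n in atTop, μ ^ n * g ∈ Y)
    (hrep : ∀ g, ∀ᶠ n in atTop, μ⁻¹ ^ n * g ∉ Y) :
    Crosses K X Y := by
  have hpow : ∀ k : ℕ, μ ^ k ∈ K → k = 0 := by
    intro k hk
    by_contra hk0
    obtain ⟨N, hN⟩ := (hattr 1).exists_forall_of_atTop
    refine hKY _ (K.pow_mem hk N) ?_
    simpa [← pow_mul] using hN (k * N) (Nat.le_mul_of_pos_left N (Nat.pos_of_ne_zero hk0))
  have hpow' : ∀ k : ℕ, μ⁻¹ ^ k ∈ K → k = 0 := fun k hk =>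
    hpow k (by simpa [inv_pow] using K.inv_mem hk)
  have hmemX : ∀ ν ∈ Λ, ∀ (n : ℕ) (x : G), ν ^ n * x ∈ X ↔ x ∈ X := by
    intro ν hν n x
    conv_lhs => rw [← hX _ (Λ.pow_mem hν n)]
    exact smul_mem_smul_set_iff
  have hμ' := Λ.inv_mem hμ
  exact ⟨infinite_rproj_of_eventually hpow <| (hattr x₀).mono fun n hn =>
      ⟨(hmemX μ hμ n x₀).2 hx₀, hn⟩,
    infinite_rproj_of_eventually hpow <| (hattr x₁).mono fun n hn =>
      ⟨fun h => hx₁ ((hmemX μ hμ n x₁).1 h), hn⟩,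
    infinite_rproj_of_eventually hpow' <| (hrep x₀).mono fun n hn =>
      ⟨(hmemX _ hμ' n x₀).2 hx₀, hn⟩,
    infinite_rproj_of_eventually hpow' <| (hrep x₁).mono fun n hn =>
      ⟨fun h => hx₁ ((hmemX _ hμ' n x₁).1 h), hn⟩⟩

end Dynamics

theorem IsRightTransversalOf.eq_one_of_mem {G : Type*} [Group G] {H A : Subgroup G} {T : Set G}
    (hT : IsRightTransversalOf H A T) {t : G} (ht : t ∈ T) (htH : t ∈ H) : t = 1 := by
  obtain ⟨s, -, hu⟩ := hT.2.2 t (hT.1 ht)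
  exact (hu t ⟨ht, by simp⟩).trans (hu 1 ⟨hT.2.1, by simpa using htH⟩).symm

theorem IsRightTransversalOf.exists_ne_one_inv_mul_mem {G : Type*} [Group G] {H A : Subgroup G}
    {T : Set G} (hT : IsRightTransversalOf H A T) {a : G} (ha : a ∈ A) (haH : a ∉ H) :
    ∃ t ∈ T, t ≠ 1 ∧ t⁻¹ * a ∈ H := by
  obtain ⟨t, ⟨htT, htH⟩, -⟩ := hT.2.2 a ha
  refine ⟨t, htT, ?_, htH⟩
  rintro rfl
  exact haH (by simpa using htH)

namespace Amalgam

variable {G : Type*} [Group G] {H A B C : Subgroup G} {T T' : Set G} {l m w : List G}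

def IsReduced (H A B : Subgroup G) (l : List G) : Prop :=
  (∀ x ∈ l, x ∉ H ∧ (x ∈ A ∨ x ∈ B)) ∧
    l.IsChain fun x y => (x ∈ A ∧ y ∈ B) ∨ (x ∈ B ∧ y ∈ A)

theorem isReduced_comm : IsReduced H A B l ↔ IsReduced H B A l := by
  unfold IsReduced
  constructor <;>
    exact fun h => ⟨fun x hx => ⟨(h.1 x hx).1, (h.1 x hx).2.symm⟩,
      h.2.imp fun _ _ => Or.symm⟩

theorem isReduced_singleton {x : G} (hx : x ∉ H) (hxAB : x ∈ A ∨ x ∈ B) :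
    IsReduced H A B [x] :=
  ⟨by simpa using ⟨hx, hxAB⟩, List.isChain_singleton x⟩

theorem IsReduced.append (hl : IsReduced H A B l) (hm : IsReduced H A B m)
    (hjoin : ∀ x ∈ l.getLast?, ∀ y ∈ m.head?, (x ∈ A ∧ y ∈ B) ∨ (x ∈ B ∧ y ∈ A)) :
    IsReduced H A B (l ++ m) :=
  ⟨fun x hx => (List.mem_append.1 hx).elim (hl.1 x) (hm.1 x),
    List.isChain_append.2 ⟨hl.2, hm.2, hjoin⟩⟩

theorem IsReduced.of_append_left (h : IsReduced H A B (l ++ m)) : IsReduced H A B l :=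
  ⟨fun x hx => h.1 x (List.mem_append_left m hx), (List.isChain_append.1 h.2).1⟩

theorem IsReduced.replace_last {x x' : G} (h : IsReduced H A B (l ++ [x])) (hx' : x' ∉ H)
    (hA : x' ∈ A ↔ x ∈ A) (hB : x' ∈ B ↔ x ∈ B) : IsReduced H A B (l ++ [x']) := by
  have hx := h.1 x (by simp)
  refine h.of_append_left.append (isReduced_singleton hx' (by rw [hA, hB]; exact hx.2)) ?_
  intro z hz y hy
  obtain rfl : x' = y := by simpa using hy
  rw [hA, hB]
  exact (List.isChain_append.1 h.2).2.2 z hz x (by simp)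

theorem IsReduced.inv_reverse (h : IsReduced H A B l) :
    IsReduced H A B (l.map (·⁻¹)).reverse := by
  refine ⟨fun x hx => ?_, ?_⟩
  · obtain ⟨y, hy, rfl⟩ := List.mem_map.1 (List.mem_reverse.1 hx)
    simpa [inv_mem_iff] using h.1 y hy
  · rw [List.isChain_reverse, List.isChain_map]
    exact h.2.imp fun x y hxy => by simp only [inv_mem_iff]; tauto

theorem IsReduced.two_le_length (hH : H = A ⊓ B) (hw : IsReduced H A B w)
    (ha : ∃ a ∈ w.head?, a ∈ A) (he : ∃ e ∈ w.getLast?, e ∈ B) : 2 ≤ w.length := by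
  match w, ha, he with
  | [x], ⟨a, ha, haA⟩, ⟨e, he, heB⟩ =>
    simp only [List.head?_cons, List.getLast?_singleton, Option.mem_def,
      Option.some.injEq] at ha he
    subst ha he
    exact ((hw.1 x (by simp)).1 (hH ▸ ⟨haA, heB⟩)).elim
  | _ :: _ :: _, _, _ => simp

def startingIn (H A B C : Subgroup G) (k : ℕ) : Set G :=
  {g | ∃ l, IsReduced H A B l ∧ k ≤ l.length ∧ (∃ x ∈ l.head?, x ∈ C) ∧
    ∃ h ∈ H, g = l.prod * h}

theorem startingIn_comm (k : ℕ) : startingIn H A B C k = startingIn H B A C k := by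
  ext g
  simp only [startingIn, isReduced_comm]

theorem startingIn_anti {k k' : ℕ} (hk : k ≤ k') :
    startingIn H A B C k' ⊆ startingIn H A B C k :=
  fun _ ⟨l, hl, hlen, hC, hh⟩ => ⟨l, hl, hk.trans hlen, hC, hh⟩

theorem IsReduced.mapsTo_startingIn (hw : IsReduced H A B w) (hC : ∃ x ∈ w.head?, x ∈ C)
    (hB : ∃ e ∈ w.getLast?, e ∈ B) :
    MapsTo (w.prod * ·) (startingIn H A B A 1 ∪ H) (startingIn H A B C w.length) := by
  obtain ⟨e, he, heB⟩ := hB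
  have hwne : w ≠ [] := by rintro rfl; simp at he
  rintro g (⟨m, hm, -, ⟨y, hy, hyA⟩, h, hh, rfl⟩ | hg)
  · refine ⟨w ++ m, hw.append hm ?_, by simp, ?_, h, hh, by simp [mul_assoc]⟩
    · intro e' he' y' hy'
      rw [Option.mem_unique he' he, Option.mem_unique hy' hy]
      exact Or.inr ⟨heB, hyA⟩
    · rwa [List.head?_append_of_ne_nil _ hwne]
  · exact ⟨w, hw, le_rfl, hC, g, hg, rfl⟩

theorem IsReduced.exists_append_mul_eq (hH : H = A ⊓ B) {init : List G} {x c : G}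
    (hl : IsReduced H A B (init ++ [x])) (hc : c ∉ H) (hcAB : c ∈ A ∨ c ∈ B) :
    ∃ l, IsReduced H A B (init ++ l) ∧
      ∃ h ∈ H, (init ++ [x]).prod * c = (init ++ l).prod * h := by
  wlog hxA : x ∈ A generalizing A B
  · have hxB := (hl.1 x (by simp)).2.resolve_left hxA
    obtain ⟨l, hl', h, hh, heq⟩ :=
      this (hH.trans (inf_comm A B)) (isReduced_comm.1 hl) hcAB.symm hxB
    exact ⟨l, isReduced_comm.2 hl', h, hh, heq⟩
  have hxB : x ∉ B := fun hxB => (hl.1 x (by simp)).1 (hH ▸ ⟨hxA, hxB⟩)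
  rcases hcAB with hcA | hcB
  · have hxcA := A.mul_mem hxA hcA
    by_cases hxc : x * c ∈ H
    · exact ⟨[], by simpa using hl.of_append_left, x * c, hxc, by simp [mul_assoc]⟩
    · refine ⟨[x * c], hl.replace_last hxc (iff_of_true hxcA hxA) ?_, 1, H.one_mem,
        by simp [mul_assoc]⟩
      exact iff_of_false (fun h => hxc (hH ▸ ⟨hxcA, h⟩)) hxB
  · refine ⟨[x, c], ?_, 1, H.one_mem, by simp [mul_assoc]⟩
    have := hl.append (isReduced_singleton hc (Or.inr hcB)) fun x' hx' c' hc' => by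
      simp only [List.getLast?_concat, List.head?_cons, Option.mem_def,
        Option.some.injEq] at hx' hc'
      exact Or.inl ⟨hx' ▸ hxA, hc' ▸ hcB⟩
    simpa using this

theorem mul_mem_startingIn (hH : H = A ⊓ B) {g a : G} (hg : g ∈ startingIn H A B C 2)
    (ha : a ∈ A ∨ a ∈ B) : g * a ∈ startingIn H A B C 1 := by
  obtain ⟨l, hl, hlen, hC, h, hh, rfl⟩ := hg
  have hc : h * a ∈ A ∨ h * a ∈ B := by
    rw [hH] at hh
    exact ha.imp (A.mul_mem hh.1) (B.mul_mem hh.2)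
  rw [mul_assoc]
  by_cases hcH : h * a ∈ H
  · exact ⟨l, hl, by omega, hC, _, hcH, rfl⟩
  obtain ⟨init, x, rfl⟩ := l.eq_nil_or_concat'.resolve_left (by rintro rfl; simp at hlen)
  have hinit : init ≠ [] := by rintro rfl; simp at hlen
  obtain ⟨l', hl', h', hh', heq⟩ := hl.exists_append_mul_eq hH hcH hc
  refine ⟨init ++ l', hl', ?_, ?_, h', hh', heq⟩
  · have := List.length_pos_iff.2 hinit
    simp only [List.length_append]
    omega
  · rwa [List.head?_append_of_ne_nil _ hinit] at hC ⊢

theorem isNormalWord_comm : IsNormalWord T T' l ↔ IsNormalWord T' T l := by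
  unfold IsNormalWord
  constructor <;>
    exact fun h => ⟨fun x hx => ⟨(h.1 x hx).1, (h.1 x hx).2.symm⟩,
      List.IsChain.imp (fun _ _ => Or.symm) h.2⟩

structure IsSplitting (H A B : Subgroup G) (T T' : Set G) : Prop where
  eq_inf : H = A ⊓ B
  left : IsRightTransversalOf H A T
  right : IsRightTransversalOf H B T'
  unique : HasUniqueNormalForms H T T'

namespace IsSplitting

theorem symm (hS : IsSplitting H A B T T') : IsSplitting H B A T' T :=
  ⟨hS.eq_inf.trans (inf_comm A B), hS.right, hS.left,
    fun g => by simpa only [isNormalWord_comm] using hS.unique g⟩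

theorem eq_one_of_mem_of_mem (hS : IsSplitting H A B T T') {t : G} (ht : t ∈ T) (ht' : t ∈ T') :
    t = 1 :=
  hS.left.eq_one_of_mem ht (hS.eq_inf ▸ ⟨hS.left.1 ht, hS.right.1 ht'⟩)

theorem isReduced (hS : IsSplitting H A B T T') (hl : IsNormalWord T T' l) : IsReduced H A B l := by
  refine ⟨fun x hx => ?_, List.IsChain.imp ?_ hl.2⟩
  · obtain ⟨hx1, hxT | hxT'⟩ := hl.1 x hx
    · exact ⟨fun hxH => hx1 (hS.left.eq_one_of_mem hxT hxH), Or.inl (hS.left.1 hxT)⟩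
    · exact ⟨fun hxH => hx1 (hS.right.eq_one_of_mem hxT' hxH), Or.inr (hS.right.1 hxT')⟩
  · rintro x y (⟨hx, hy⟩ | ⟨hx, hy⟩)
    · exact Or.inl ⟨hS.left.1 hx, hS.right.1 hy⟩
    · exact Or.inr ⟨hS.right.1 hx, hS.left.1 hy⟩

/-- Normalising a reduced word from left to right, pushing the `H`-part of each letter
into the next one, keeps every letter on its side. -/
theorem exists_mul_prod_eq (hS : IsSplitting H A B T T') (hl : IsReduced H A B l) {σ : G}
    (hσ : σ ∈ H) :
    ∃ l', IsNormalWord T T' l' ∧ ∃ σ' ∈ H, σ * l.prod = l'.prod * σ' ∧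
      List.Forall₂ (fun x y => (x ∈ A ∧ y ∈ T) ∨ (x ∈ B ∧ y ∈ T')) l l' := by
  induction l generalizing σ with
  | nil => exact ⟨[], ⟨by simp, List.isChain_nil⟩, σ, hσ, by simp, List.Forall₂.nil⟩
  | cons x rest ih =>
    have hx := hl.1 x (by simp)
    have hσx : σ * x ∉ H := fun h => hx.1 (by simpa using H.mul_mem (H.inv_mem hσ) h)
    have hσAB : σ ∈ A ⊓ B := hS.eq_inf ▸ hσ
    obtain ⟨t, hxt, ht1, hσ₁⟩ : ∃ t, ((x ∈ A ∧ t ∈ T) ∨ (x ∈ B ∧ t ∈ T')) ∧ t ≠ 1 ∧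
        t⁻¹ * (σ * x) ∈ H := by
      rcases hx.2 with hxA | hxB
      · obtain ⟨t, htT, ht1, htH⟩ :=
          hS.left.exists_ne_one_inv_mul_mem (A.mul_mem hσAB.1 hxA) hσx
        exact ⟨t, Or.inl ⟨hxA, htT⟩, ht1, htH⟩
      · obtain ⟨t, htT, ht1, htH⟩ :=
          hS.right.exists_ne_one_inv_mul_mem (B.mul_mem hσAB.2 hxB) hσx
        exact ⟨t, Or.inr ⟨hxB, htT⟩, ht1, htH⟩
    obtain ⟨rest', hrest', σ', hσ', heq, hrel⟩ :=
      ih ⟨fun y hy => hl.1 y (by simp [hy]), hl.2.tail⟩ hσ₁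
    refine ⟨t :: rest', ⟨?_, List.isChain_cons.2 ⟨?_, hrest'.2⟩⟩, σ', hσ', ?_,
      List.Forall₂.cons hxt hrel⟩
    · intro y hy
      rcases List.mem_cons.1 hy with rfl | hy
      · exact ⟨ht1, by tauto⟩
      · exact hrest'.1 y hy
    · intro y hy
      cases rest with
      | nil => cases hrel; simp at hy
      | cons z rest₀ =>
        obtain _ | ⟨hzy, -⟩ := hrel
        obtain rfl : _ = y := by simpa using hy
        have hxz := (List.isChain_cons_cons.1 hl.2).1
        have hxAB : ¬ (x ∈ A ∧ x ∈ B) := fun h => hx.1 (hS.eq_inf ▸ h)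
        have hzAB : ¬ (z ∈ A ∧ z ∈ B) := fun h => (hl.1 z (by simp)).1 (hS.eq_inf ▸ h)
        tauto
    · calc σ * (x :: rest).prod = t * (t⁻¹ * (σ * x) * rest.prod) := by simp [mul_assoc]
        _ = (t :: rest').prod * σ' := by rw [heq]; simp [mul_assoc]

theorem eq_of_prod_mul_eq (hS : IsSplitting H A B T T') {l₁ l₂ : List G} {σ₁ σ₂ : G}
    (h₁ : IsNormalWord T T' l₁) (hσ₁ : σ₁ ∈ H) (h₂ : IsNormalWord T T' l₂)
    (hσ₂ : σ₂ ∈ H) (heq : l₁.prod * σ₁ = l₂.prod * σ₂) : l₁ = l₂ :=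
  congrArg Prod.fst <| (hS.unique _).unique (y₁ := (l₁, σ₁)) (y₂ := (l₂, σ₂))
    ⟨h₁, hσ₁, rfl⟩ ⟨h₂, hσ₂, heq⟩

theorem mul_mem_amalgX (hS : IsSplitting H A B T T') {σ g : G} (hσ : σ ∈ H)
    (hg : g ∈ startingIn H A B A 1) : σ * g ∈ amalgX H T T' := by
  obtain ⟨l, hl, -, ⟨x₀, hx, hxA⟩, h, hh, rfl⟩ := hg
  obtain ⟨l', hl', σ', hσ', heq, hrel⟩ := hS.exists_mul_prod_eq hl hσ
  cases l with
  | nil => simp at hx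
  | cons x rest =>
    obtain rfl : x = x₀ := by simpa using hx
    obtain _ | ⟨hxy, -⟩ := hrel
    refine ⟨_, σ' * h, hl', H.mul_mem hσ' hh, by rw [← mul_assoc, heq, mul_assoc], _, rfl, ?_⟩
    have hxB : x ∉ B := fun hxB => (hl.1 x List.mem_cons_self).1 (hS.eq_inf ▸ ⟨hxA, hxB⟩)
    exact (hxy.resolve_right fun h => hxB h.1).2

theorem amalgX_subset (hS : IsSplitting H A B T T') : amalgX H T T' ⊆ startingIn H A B A 1 := by
  rintro _ ⟨l, σ, hl, hσ, rfl, x, hx, hxT⟩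
  have hl0 : l ≠ [] := by rintro rfl; simp at hx
  exact ⟨l, hS.isReduced hl, List.length_pos_iff.2 hl0, ⟨x, hx, hS.left.1 hxT⟩, σ, hσ,
    rfl⟩

theorem amalgX_eq (hS : IsSplitting H A B T T') : amalgX H T T' = startingIn H A B A 1 :=
  hS.amalgX_subset.antisymm fun g hg => by simpa using hS.mul_mem_amalgX H.one_mem hg

theorem amalgX_symm_eq (hS : IsSplitting H A B T T') : amalgX H T' T = startingIn H A B B 1 := by
  rw [hS.symm.amalgX_eq, startingIn_comm]

theorem smul_amalgX (hS : IsSplitting H A B T T') {h : G} (hh : h ∈ H) :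
    h • amalgX H T T' = amalgX H T T' := by
  have key : ∀ h ∈ H, h • amalgX H T T' ⊆ amalgX H T T' := by
    rintro h hh _ ⟨g, hg, rfl⟩
    exact hS.mul_mem_amalgX hh (hS.amalgX_subset hg)
  exact (key h hh).antisymm (subset_smul_set_iff.2 (key _ (H.inv_mem hh)))

theorem notMem_amalgX (hS : IsSplitting H A B T T') {h : G} (hh : h ∈ H) :
    h ∉ amalgX H T T' := by
  rintro ⟨l, σ, hl, hσ, heq, x, hx, -⟩
  obtain rfl := hS.eq_of_prod_mul_eq hl hσ (l₂ := []) ⟨by simp, List.isChain_nil⟩ hh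
    (by simpa using heq.symm)
  simp at hx

theorem disjoint_amalgX (hS : IsSplitting H A B T T') :
    Disjoint (amalgX H T T') (amalgX H T' T) := by
  rw [Set.disjoint_left]
  rintro _ ⟨l, σ, hl, hσ, rfl, x, hx, hxT⟩ ⟨l', σ', hl', hσ', heq, x', hx', hxT'⟩
  obtain rfl := hS.eq_of_prod_mul_eq hl hσ (isNormalWord_comm.2 hl') hσ' heq
  obtain rfl := Option.mem_unique hx hx'
  exact (hl.1 x (List.mem_of_mem_head? hx)).1 (hS.eq_one_of_mem_of_mem hxT hxT')

theorem compl_amalgX (hS : IsSplitting H A B T T') :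
    (amalgX H T T')ᶜ = amalgX H T' T ∪ H := by
  ext g
  refine ⟨fun hg => ?_, ?_⟩
  · obtain ⟨⟨l, σ⟩, ⟨hl, hσ, rfl⟩, -⟩ := hS.unique g
    cases l with
    | nil => exact Or.inr (by simpa using hσ)
    | cons x rest =>
      refine Or.inl ⟨_, σ, isNormalWord_comm.1 hl, hσ, rfl, x, rfl, ?_⟩
      exact (hl.1 x (by simp)).2.resolve_left fun hxT => hg ⟨_, σ, hl, hσ, rfl, x, rfl, hxT⟩
  · rintro (hg | hg)
    · exact Set.disjoint_right.1 hS.disjoint_amalgX hg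
    · exact hS.notMem_amalgX hg

theorem closure_eq_top (hS : IsSplitting H A B T T') :
    Submonoid.closure ((A : Set G) ∪ B) = ⊤ := by
  refine eq_top_iff.2 fun g _ => ?_
  obtain ⟨⟨l, σ⟩, ⟨hl, hσ, rfl⟩, -⟩ := hS.unique g
  refine Submonoid.mul_mem _ (Submonoid.list_prod_mem _ fun x hx => Submonoid.subset_closure ?_)
    (Submonoid.subset_closure (Or.inl (hS.eq_inf ▸ hσ : σ ∈ A ⊓ B).1))
  exact (hl.1 x hx).2.imp (fun h => hS.left.1 h) fun h => hS.right.1 h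

theorem amalgX_nonempty (hS : IsSplitting H A B T T') (hA : H < A) :
    (amalgX H T T').Nonempty := by
  obtain ⟨a, ha, haH⟩ := SetLike.exists_of_lt hA
  rw [hS.amalgX_eq]
  exact ⟨a, [a], isReduced_singleton haH (Or.inl ha), le_rfl, ⟨a, rfl, ha⟩, 1, H.one_mem,
    by simp⟩

theorem exists_isReduced_eq_prod (hS : IsSplitting H A B T T') {g : G} (hg : g ∉ H) :
    ∃ w, IsReduced H A B w ∧ w ≠ [] ∧ g = w.prod := by
  obtain ⟨⟨l, σ⟩, ⟨hl, hσ, rfl⟩, -⟩ := hS.unique g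
  obtain ⟨init, x, rfl⟩ := l.eq_nil_or_concat'.resolve_left (by rintro rfl; simp_all)
  have hσAB : σ ∈ A ⊓ B := hS.eq_inf ▸ hσ
  have hx := (hS.isReduced hl).1 x (by simp)
  refine ⟨init ++ [x * σ], (hS.isReduced hl).replace_last ?_ (A.mul_mem_cancel_right hσAB.1)
    (B.mul_mem_cancel_right hσAB.2), by simp, by simp [mul_assoc]⟩
  exact fun h => hx.1 (by simpa using H.mul_mem h (H.inv_mem hσ))

/-- An element moving the almost invariant set strictly into itself is cyclically reduced,
from `A` to `B`: otherwise it would map the set, or its complement, into one of the two. -/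
theorem exists_isReduced_of_smul_ssubset (hS : IsSplitting H A B T T') {μ : G}
    (hμ : μ • amalgX H T T' ⊂ amalgX H T T') :
    ∃ w, IsReduced H A B w ∧ (∃ a ∈ w.head?, a ∈ A) ∧ (∃ e ∈ w.getLast?, e ∈ B) ∧
      μ = w.prod := by
  obtain ⟨w, hw, hwne, rfl⟩ := hS.exists_isReduced_eq_prod fun h => hμ.ne (hS.smul_amalgX h)
  obtain ⟨a, ha⟩ : ∃ a, w.head? = some a := ⟨w.head hwne, List.head?_eq_some_head hwne⟩
  obtain ⟨e, he⟩ : ∃ e, w.getLast? = some e :=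
    ⟨w.getLast hwne, List.getLast?_eq_getLast_of_ne_nil hwne⟩
  have hlen : 1 ≤ w.length := List.length_pos_iff.2 hwne
  have hP : startingIn H A B A w.length ⊆ amalgX H T T' := hS.amalgX_eq ▸ startingIn_anti hlen
  have hQ : startingIn H A B B w.length ⊆ (amalgX H T T')ᶜ := by
    rw [hS.compl_amalgX, hS.amalgX_symm_eq]
    exact (startingIn_anti hlen).trans subset_union_left
  have hsides := (hw.1 a (List.mem_of_mem_head? ha)).2
  rcases (hw.1 e (List.mem_of_mem_getLast? he)).2 with heA | heB
  · have hmaps : ∀ C : Subgroup G, a ∈ C →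
        MapsTo (w.prod * ·) (amalgX H T T')ᶜ (startingIn H A B C w.length) := fun C haC => by
      rw [hS.compl_amalgX, hS.amalgX_symm_eq, startingIn_comm (C := B) 1,
        startingIn_comm (C := C) w.length]
      exact (isReduced_comm.1 hw).mapsTo_startingIn ⟨a, ha, haC⟩ ⟨e, he, heA⟩
    exfalso
    rcases hsides with haA | haB
    · exact not_mapsTo_compl_of_smul_ssubset hμ (Or.inl hP) (hmaps A haA)
    · exact not_mapsTo_compl_of_smul_ssubset hμ (Or.inr hQ) (hmaps B haB)
  · refine ⟨w, hw, ⟨a, ha, hsides.resolve_right fun haB => ?_⟩, ⟨e, he, heB⟩, rfl⟩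
    refine not_mapsTo_of_smul_ssubset hμ hQ ?_
    exact (hw.mapsTo_startingIn ⟨a, ha, haB⟩ ⟨e, he, heB⟩).mono_left
      (hS.amalgX_eq ▸ subset_union_left)

/-- Ping-pong: `w` maps `amalgX H T T' ∪ H` to reduced words of length `≥ 2` starting in `A`,
and right multiplication by an element of `A ∪ B` keeps these in `amalgX H T T'`. -/
theorem exists_pow_mul_mem_amalgX (hS : IsSplitting H A B T T') {w : List G}
    (hw : IsReduced H A B w) (ha : ∃ a ∈ w.head?, a ∈ A) (he : ∃ e ∈ w.getLast?, e ∈ B)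
    (g : G) :
    ∃ n : ℕ, w.prod ^ n * g ∈ amalgX H T T' := by
  have h2 := hw.two_le_length hS.eq_inf ha he
  have hmaps := hw.mapsTo_startingIn ha he
  obtain ⟨n, hn⟩ := exists_pow_mul_mem_of_closure_eq_top hS.closure_eq_top
    (R := startingIn H A B A 1 ∪ H) (Or.inr H.one_mem)
    (fun y hy a ha => Or.inl (mul_mem_startingIn hS.eq_inf (startingIn_anti h2 (hmaps hy)) ha)) g
  refine ⟨n + 1, ?_⟩
  rw [hS.amalgX_eq, pow_succ', mul_assoc]
  exact startingIn_anti (by omega) (hmaps hn)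

theorem eventually_mem_amalgX (hS : IsSplitting H A B T T') {μ : G}
    (hμ : μ • amalgX H T T' ⊂ amalgX H T T') (g : G) :
    (∀ᶠ n in atTop, μ ^ n * g ∈ amalgX H T T') ∧
      ∀ᶠ n in atTop, μ⁻¹ ^ n * g ∉ amalgX H T T' := by
  obtain ⟨w, hw, ha, he, rfl⟩ := hS.exists_isReduced_of_smul_ssubset hμ
  have hP : MapsTo (w.prod * ·) (amalgX H T T') (amalgX H T T') := fun y hy =>
    hμ.1 (smul_mem_smul_set hy)
  have hPc : MapsTo (w.prod⁻¹ * ·) (amalgX H T T')ᶜ (amalgX H T T')ᶜ := fun y hy hy' =>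
    hy (by simpa using hP hy')
  obtain ⟨n, hn⟩ := hS.exists_pow_mul_mem_amalgX hw ha he g
  obtain ⟨a, ha, haA⟩ := ha
  obtain ⟨e, he, heB⟩ := he
  obtain ⟨m, hm⟩ := hS.symm.exists_pow_mul_mem_amalgX (isReduced_comm.1 hw.inv_reverse)
    ⟨e⁻¹, by simp [List.head?_reverse, List.getLast?_map, Option.mem_def.1 he], inv_mem heB⟩
    ⟨a⁻¹, by simp [List.getLast?_reverse, List.head?_map, Option.mem_def.1 ha], inv_mem haA⟩
    g
  rw [← List.prod_inv_reverse] at hm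
  exact ⟨eventually_pow_mul_mem hP hn,
    eventually_pow_mul_mem hPc (Set.disjoint_right.1 hS.disjoint_amalgX hm)⟩

end IsSplitting

end Amalgam

theorem crosses_of_exists_strict_translate_general {G : Type*} [Group G]
    (Lam Sg A1 B1 A2 B2 : Subgroup G)
    -- `G = A₁ ∗_Λ B₁` with `Λ` proper in `A₁` and `B₁`:
    (hA1 : Lam < A1) (hLam : Lam = A1 ⊓ B1)
    (T1 T1' : Set G)
    (hT1 : IsRightTransversalOf Lam A1 T1) (hT1' : IsRightTransversalOf Lam B1 T1')
    (hNF1 : HasUniqueNormalForms Lam T1 T1')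
    -- `G = A₂ ∗_Σ B₂` with `Σ` proper in `A₂` and `B₂`:
    (hSg : Sg = A2 ⊓ B2)
    (T2 T2' : Set G)
    (hT2 : IsRightTransversalOf Sg A2 T2) (hT2' : IsRightTransversalOf Sg B2 T2')
    (hNF2 : HasUniqueNormalForms Sg T2 T2')
    -- `X` and `Y` are the almost invariant sets associated to the two splittings:
    (X Y : Set G) (hX : X = amalgX Lam T1 T1') (hY : Y = amalgX Sg T2 T2')
    -- some `λ ∈ Λ` satisfies `λY ⊊ Y` or `λY* ⊊ Y*`:
    (hmove : ∃ lam ∈ Lam, lam • Y ⊂ Y ∨ lam • Yᶜ ⊂ Yᶜ) :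
    Crosses Sg X Y := by
  have hS1 : Amalgam.IsSplitting Lam A1 B1 T1 T1' := ⟨hLam, hT1, hT1', hNF1⟩
  have hS2 : Amalgam.IsSplitting Sg A2 B2 T2 T2' := ⟨hSg, hT2, hT2', hNF2⟩
  subst hX hY
  obtain ⟨μ, hμ, hμY⟩ := exists_smul_ssubset_of_smul_ssubset_or_smul_compl_ssubset hmove
  obtain ⟨x₀, hx₀⟩ := hS1.amalgX_nonempty hA1
  exact crosses_of_eventually hμ (fun _ hl => hS1.smul_amalgX hl) hx₀
    (hS1.notMem_amalgX Lam.one_mem) (fun _ hk => hS2.notMem_amalgX hk)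
    (fun g => (hS2.eventually_mem_amalgX hμY g).1) (fun g => (hS2.eventually_mem_amalgX hμY g).2)

theorem crosses_of_exists_strict_translate {G : Type*} [Group G] [Group.FG G]
    (Lam Sg A1 B1 A2 B2 : Subgroup G) (hLfg : Lam.FG) (hSfg : Sg.FG)
    -- `G = A₁ ∗_Λ B₁` with `Λ` proper in `A₁` and `B₁`:
    (hA1 : Lam < A1) (hB1 : Lam < B1) (hLam : Lam = A1 ⊓ B1)
    (T1 T1' : Set G)
    (hT1 : IsRightTransversalOf Lam A1 T1) (hT1' : IsRightTransversalOf Lam B1 T1')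
    (hNF1 : HasUniqueNormalForms Lam T1 T1')
    -- `G = A₂ ∗_Σ B₂` with `Σ` proper in `A₂` and `B₂`:
    (hA2 : Sg < A2) (hB2 : Sg < B2) (hSg : Sg = A2 ⊓ B2)
    (T2 T2' : Set G)
    (hT2 : IsRightTransversalOf Sg A2 T2) (hT2' : IsRightTransversalOf Sg B2 T2')
    (hNF2 : HasUniqueNormalForms Sg T2 T2')
    -- `X` and `Y` are the almost invariant sets associated to the two splittings:
    (X Y : Set G) (hX : X = amalgX Lam T1 T1') (hY : Y = amalgX Sg T2 T2')
    -- every `gΛg⁻¹ ∩ hΣh⁻¹` has infinite index in `gΛg⁻¹`: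
    (hconj : ∀ g h : G,
      Subgroup.relIndex (Subgroup.map (MulAut.conj h).toMonoidHom Sg)
        (Subgroup.map (MulAut.conj g).toMonoidHom Lam) = 0)
    -- some `λ ∈ Λ` satisfies `λY ⊊ Y` or `λY* ⊊ Y*`:
    (hmove : ∃ lam ∈ Lam, lam • Y ⊂ Y ∨ lam • Yᶜ ⊂ Yᶜ) :
    Crosses Sg X Y :=
  crosses_of_exists_strict_translate_general Lam Sg A1 B1 A2 B2 hA1 hLam T1 T1' hT1 hT1' hNF1 hSg T2
    T2' hT2 hT2' hNF2 X Y hX hY hmove
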